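/- arXiv:1204.4908 — 3 statements merged into one kernel-verified Lean document; each statement's English description precedes it below -/
import Mathlib

section
/- For every integer n ≥ 2 and every integer i ≥ 1, the i-th term of the lower central series of the Lie algebra u_n equals u_{n,2} = P_1∂_2 ⊕ ⋯ ⊕ P_{n-1}∂_n; that is, the lower central series of u_n stabilizes at the first step. -/
open MvPolynomial

noncomputable section


/-- If a derivation of `MvPolynomial σ K` maps every generator `X j`, `j ∈ s`, into the
subalgebra `supported K s` of polynomials supported on `s`, then it maps the whole of
`supported K s` into itself. -/
theorem Derivation.mem_supported_of_forall_mem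
    {K : Type*} [CommRing K] {σ : Type*} (s : Set σ)
    (D : Derivation K (MvPolynomial σ K) (MvPolynomial σ K))
    (h : ∀ j ∈ s, D (X j) ∈ supported K s)
    {p : MvPolynomial σ K} (hp : p ∈ supported K s) : D p ∈ supported K s := by
  rw [supported_eq_adjoin_X] at hp
  induction hp using Algebra.adjoin_induction with
  | mem x hx =>
    obtain ⟨j, hj, rfl⟩ := hx
    exact h j hj
  | algebraMap r =>
    rw [Derivation.map_algebraMap]
    exact zero_mem _
  | add x y hx hy ihx ihy =>
    rw [map_add]
    exact add_mem ihx ihy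
  | mul x y hx hy ihx ihy =>
    rw [Derivation.leibniz, smul_eq_mul, smul_eq_mul]
    rw [← supported_eq_adjoin_X] at hx hy
    exact add_mem (mul_mem hx ihy) (mul_mem hy ihx)

/-- If a derivation of `MvPolynomial σ K` kills every generator `X j`, `j ∈ s`, then it
kills the whole subalgebra `supported K s`. -/
theorem Derivation.eq_zero_of_forall_eq_zero
    {K : Type*} [CommRing K] {σ : Type*} (s : Set σ)
    (D : Derivation K (MvPolynomial σ K) (MvPolynomial σ K))
    (h : ∀ j ∈ s, D (X j) = 0)
    {p : MvPolynomial σ K} (hp : p ∈ supported K s) : D p = 0 := by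
  rw [supported_eq_adjoin_X] at hp
  induction hp using Algebra.adjoin_induction with
  | mem x hx =>
    obtain ⟨j, hj, rfl⟩ := hx
    exact h j hj
  | algebraMap r =>
    rw [Derivation.map_algebraMap]
  | add x y hx hy ihx ihy =>
    rw [map_add, ihx, ihy, add_zero]
  | mul x y hx hy ihx ihy =>
    rw [Derivation.leibniz, ihx, ihy, smul_zero, smul_zero, add_zero]

/-- The defining condition for the Lie algebra `u_n = K∂₁ ⊕ P₁∂₂ ⊕ ⋯ ⊕ P_{n-1}∂ₙ` of
triangular polynomial derivations of `P_n = K[x₁,…,xₙ]` (variables indexed by `Fin n`,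
zero-based): a derivation `D` of `P_n` is triangular iff, for every `i`, the polynomial
`D (X i)` only involves the variables `X j` with `j < i` (so the coefficient of `∂_i`
lies in `P_{i-1}`, where `P₀ = K`). -/
def triSet (K : Type*) [Field K] (n : ℕ) :
    Set (Derivation K (MvPolynomial (Fin n) K) (MvPolynomial (Fin n) K)) :=
  {D | ∀ i : Fin n, D (X i) ∈ supported K {j : Fin n | (j : ℕ) < (i : ℕ)}}

theorem supported_upward {K : Type*} [Field K] {n : ℕ}
    (p : MvPolynomial (Fin n) K) (s t : Set (Fin n)) (hst : s ⊆ t)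
    (hp : p ∈ supported K s) : p ∈ supported K t :=
  supported_mono hst hp

theorem triSet_stable {K : Type*} [Field K] {n : ℕ}
    {D : Derivation K (MvPolynomial (Fin n) K) (MvPolynomial (Fin n) K)}
    (hD : D ∈ triSet K n) (i : Fin n) :
    ∀ j ∈ {j' : Fin n | (j' : ℕ) < (i : ℕ)},
      D (X j) ∈ supported K {j' : Fin n | (j' : ℕ) < (i : ℕ)} := by
  intro j hj
  refine supported_upward _ {j' : Fin n | (j' : ℕ) < (j : ℕ)} _ ?_ (hD j)
  intro l hl
  have hl' : (l : ℕ) < (j : ℕ) := hl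
  have hj' : (j : ℕ) < (i : ℕ) := hj
  exact lt_trans hl' hj'

theorem triSet_lie {K : Type*} [Field K] {n : ℕ}
    {a b : Derivation K (MvPolynomial (Fin n) K) (MvPolynomial (Fin n) K)}
    (ha : a ∈ triSet K n) (hb : b ∈ triSet K n) : ⁅a, b⁆ ∈ triSet K n := by
  intro i
  rw [Derivation.commutator_apply]
  exact sub_mem
    (Derivation.mem_supported_of_forall_mem _ a (triSet_stable ha i) (hb i))
    (Derivation.mem_supported_of_forall_mem _ b (triSet_stable hb i) (ha i))

/-- The Lie algebra `u_n = K∂₁ ⊕ P₁∂₂ ⊕ ⋯ ⊕ P_{n-1}∂ₙ` of triangular polynomial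
derivations, as a Lie subalgebra of the Lie algebra of all `K`-derivations of the
polynomial algebra `P_n = K[x₁,…,xₙ]`. -/
def triangular (K : Type*) [Field K] (n : ℕ) :
    LieSubalgebra K (Derivation K (MvPolynomial (Fin n) K) (MvPolynomial (Fin n) K)) where
  carrier := triSet K n
  add_mem' := fun {a b} ha hb i => by
    rw [Derivation.add_apply]; exact add_mem (ha i) (hb i)
  zero_mem' := fun i => by
    rw [Derivation.zero_apply]; exact zero_mem _
  smul_mem' := fun c a ha i => by
    rw [Derivation.smul_apply]; exact Subalgebra.smul_mem _ (ha i) c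
  lie_mem' := fun {a b} ha hb => triSet_lie ha hb

theorem mem_triangular_iff {K : Type*} [Field K] {n : ℕ}
    (D : Derivation K (MvPolynomial (Fin n) K) (MvPolynomial (Fin n) K)) :
    D ∈ triangular K n ↔
      ∀ i : Fin n, D (X i) ∈ supported K {j : Fin n | (j : ℕ) < (i : ℕ)} := Iff.rfl

/-- The subspace `u_{n,k+1} = ⊕_{j ≥ k+1} P_{j-1}∂_j` of `u_n` (1-based indexing as in the
paper): the triangular derivations whose coefficients at `∂₁, …, ∂_k` vanish, i.e.
(zero-based) `D (X j) = 0` for all `j < k`. -/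
def lowIdeal (K : Type*) [Field K] (n k : ℕ) : Submodule K ↥(triangular K n) where
  carrier := {a | ∀ j : Fin n, (j : ℕ) < k → a.val (X j) = 0}
  add_mem' := by
    intro a b ha hb j hj
    have hab : (a + b : ↥(triangular K n)).val = a.val + b.val := rfl
    rw [hab, Derivation.add_apply, ha j hj, hb j hj, add_zero]
  zero_mem' := by
    intro j hj
    have h0 : (0 : ↥(triangular K n)).val = 0 := rfl
    rw [h0, Derivation.zero_apply]
  smul_mem' := by
    intro c a ha j hj
    have hca : (c • a : ↥(triangular K n)).val = c • a.val := rfl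
    rw [hca, Derivation.smul_apply, ha j hj, smul_zero]

/-!
The coefficient of `∂₁` in a triangular derivation is a constant, which every derivation kills;
hence `[u_n, u_n] ⊆ u_{n,2}`. Conversely `ad ∂₁` maps `u_{n,2}` onto itself: integrating every
coefficient in `x₁` (possible in characteristic zero, and harmless for the coefficient of `∂_j`,
`j ≥ 2`, since `x₁ ∈ P_{j-1}`) gives a preimage in `u_{n,2}`. By induction, `u_{n,2} = [∂₁, u_{n,2}] ⊆ C^i` for all
`i`.
-/

theorem MvPolynomial.monomial_mem_supported {R σ : Type*} [CommSemiring R] {s : Set σ}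
    {m : σ →₀ ℕ} (hm : ↑m.support ⊆ s) (c : R) : monomial m c ∈ supported R s := by
  rcases eq_or_ne c 0 with rfl | hc
  · rw [monomial_zero]
    exact zero_mem _
  · rw [mem_supported, vars_monomial hc]
    exact hm

section Antiderivative

variable {K σ : Type*} [Field K]

def antideriv (i : σ) (p : MvPolynomial σ K) : MvPolynomial σ K :=
  ∑ m ∈ p.support, monomial (m + Finsupp.single i 1) (p.coeff m / ((m i : K) + 1))

@[simp]
theorem antideriv_zero (i : σ) : antideriv i (0 : MvPolynomial σ K) = 0 := by
  simp [antideriv]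

theorem pderiv_antideriv [CharZero K] (i : σ) (p : MvPolynomial σ K) :
    pderiv i (antideriv i p) = p := by
  rw [antideriv, map_sum]
  refine Eq.trans (Finset.sum_congr rfl fun m _ => ?_) (support_sum_monomial_coeff p)
  rw [pderiv_monomial, add_tsub_cancel_right, Finsupp.add_apply, Finsupp.single_eq_same,
    Nat.cast_add, Nat.cast_one, div_mul_cancel₀ _ (Nat.cast_add_one_ne_zero (m i))]

theorem antideriv_mem_supported {s : Set σ} {i : σ} (hi : i ∈ s) {p : MvPolynomial σ K}
    (hp : p ∈ supported K s) : antideriv i p ∈ supported K s := by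
  refine Subalgebra.sum_mem _ fun m hm => ?_
  rw [monomial_add_single, pow_one]
  have hm_vars : ↑m.support ⊆ s :=
    (Finset.coe_subset.2 (support_subset_vars_of_mem_support hm)).trans (mem_supported.1 hp)
  exact mul_mem (monomial_mem_supported hm_vars _) (X_mem_supported.2 hi)

def antiderivCoeffs (i : σ) (D : Derivation K (MvPolynomial σ K) (MvPolynomial σ K)) :
    Derivation K (MvPolynomial σ K) (MvPolynomial σ K) :=
  mkDerivation K fun j => antideriv i (D (X j))

theorem antiderivCoeffs_X (i : σ) (D : Derivation K (MvPolynomial σ K) (MvPolynomial σ K))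
    (j : σ) : antiderivCoeffs i D (X j) = antideriv i (D (X j)) :=
  mkDerivation_X K _ j

theorem lie_pderiv_antiderivCoeffs [CharZero K] (i : σ)
    (D : Derivation K (MvPolynomial σ K) (MvPolynomial σ K)) :
    ⁅(pderiv i : Derivation K (MvPolynomial σ K) (MvPolynomial σ K)), antiderivCoeffs i D⁆ =
      D := by
  classical
  refine derivation_ext fun j => ?_
  rw [Derivation.commutator_apply, antiderivCoeffs_X, pderiv_antideriv, pderiv_X,
    Pi.single_apply]
  split_ifs <;> simp

end Antiderivative

section Triangular

variable {K : Type*} [Field K] {n : ℕ}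

theorem pderiv_mem_triangular (i : Fin n) : pderiv i ∈ triangular K n := by
  classical
  intro j
  rw [pderiv_X, Pi.single_apply]
  split_ifs
  · exact one_mem _
  · exact zero_mem _

theorem apply_apply_X_eq_zero_of_mem_triangular
    (D : Derivation K (MvPolynomial (Fin n) K) (MvPolynomial (Fin n) K))
    {D' : Derivation K (MvPolynomial (Fin n) K) (MvPolynomial (Fin n) K)}
    (hD' : D' ∈ triangular K n) {j : Fin n} (hj : (j : ℕ) = 0) : D (D' (X j)) = 0 :=
  Derivation.eq_zero_of_forall_eq_zero _ D (fun _ hj' => absurd hj' (by simp [hj])) (hD' j)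

theorem lie_mem_lowIdeal_one (a b : triangular K n) : ⁅a, b⁆ ∈ lowIdeal K n 1 := fun j hj => by
  have hj0 : (j : ℕ) = 0 := Nat.lt_one_iff.1 hj
  change ⁅a.val, b.val⁆ (X j) = 0
  rw [Derivation.commutator_apply, apply_apply_X_eq_zero_of_mem_triangular _ b.2 hj0,
    apply_apply_X_eq_zero_of_mem_triangular _ a.2 hj0, sub_zero]

theorem lowerCentralSeries_one_le_lowIdeal :
    (LieModule.lowerCentralSeries K (triangular K n) (triangular K n) 1).toSubmodule ≤
      lowIdeal K n 1 := by
  rw [LieModule.lowerCentralSeries_succ, LieSubmodule.lieIdeal_oper_eq_linear_span',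
    Submodule.span_le]
  rintro _ ⟨a, -, b, -, rfl⟩
  exact lie_mem_lowIdeal_one a b

theorem exists_lie_pderiv_eq [CharZero K] (hn : 0 < n) {D : triangular K n}
    (hD : D ∈ lowIdeal K n 1) :
    ∃ E ∈ lowIdeal K n 1,
      ⁅(⟨pderiv ⟨0, hn⟩, pderiv_mem_triangular _⟩ : triangular K n), E⁆ = D := by
  have hE : antiderivCoeffs ⟨0, hn⟩ D.val ∈ triangular K n := fun j => by
    rw [antiderivCoeffs_X]
    rcases Nat.eq_zero_or_pos j with hj | hj
    · rw [hD j (by omega), antideriv_zero]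
      exact zero_mem _
    · exact antideriv_mem_supported (s := {j' : Fin n | (j' : ℕ) < j}) hj (D.2 j)
  refine ⟨⟨_, hE⟩, fun j hj => ?_, ?_⟩
  · change antiderivCoeffs _ D.val (X j) = 0
    rw [antiderivCoeffs_X, hD j hj, antideriv_zero]
  · ext1
    rw [LieSubalgebra.coe_bracket]
    exact lie_pderiv_antiderivCoeffs _ D.val

theorem lowIdeal_one_le_lowerCentralSeries [CharZero K] (hn : 0 < n) (i : ℕ) :
    lowIdeal K n 1 ≤
      (LieModule.lowerCentralSeries K (triangular K n) (triangular K n) i).toSubmodule := by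
  induction i with
  | zero =>
    rw [LieModule.lowerCentralSeries_zero, LieSubmodule.top_toSubmodule]
    exact le_top
  | succ i ih =>
    intro D hD
    obtain ⟨E, hE, rfl⟩ := exists_lie_pderiv_eq hn hD
    rw [LieModule.lowerCentralSeries_succ]
    exact LieSubmodule.lie_mem_lie (LieSubmodule.mem_top _) (ih hE)

end Triangular

/-- For every integer `n ≥ 2` and every `i ≥ 1`, the `i`-th term of the
lower central series of `u_n` equals `u_{n,2} = P₁∂₂ ⊕ ⋯ ⊕ P_{n-1}∂ₙ` (the triangular
derivations with vanishing coefficient at `∂₁`): the lower central series stabilizes at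
the first step. -/
theorem triangular_lowerCentralSeries_eq
    (K : Type*) [Field K] [CharZero K] (n : ℕ) (hn : 2 ≤ n) :
    ∀ i : ℕ, 1 ≤ i →
      (LieModule.lowerCentralSeries K ↥(triangular K n) ↥(triangular K n) i :
          Set ↥(triangular K n)) =
        (lowIdeal K n 1 : Set ↥(triangular K n)) := by
  intro i hi
  have hlcs := LieModule.antitone_lowerCentralSeries K (triangular K n) (triangular K n) hi
  exact Set.Subset.antisymm (fun D hD => lowerCentralSeries_one_le_lowIdeal (hlcs hD))
    (lowIdeal_one_le_lowerCentralSeries (by omega) i)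
end
end

section
/- Let n ≥ 2. The Lie algebra u_n is locally finite dimensional and locally nilpotent: for every finite subset S of u_n, the Lie subalgebra of u_n generated by S is a finite-dimensional and nilpotent Lie algebra. -/
/-!
Give the variable `x_j` the weight `(d + 1) ^ (j + 1)`, where `d` bounds the total degrees of
the coefficients of the finitely many generators. The coefficient of `∂_j` in a generator only
involves earlier variables, so its weight is at most `d (d + 1) ^ j < (d + 1) ^ (j + 1)`: every
generator strictly lowers weighted degree. Derivations lowering weighted degree form a Lie
algebra which is finite dimensional, since the coefficient of `∂_j` has weighted degree below
the weight of `x_j`, and nilpotent, since a `k`-fold bracket lowers weighted degree by `k` and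
hence vanishes once `k` exceeds every weight. The Lie span of the generators embeds into it.
-/

open MvPolynomial

noncomputable section


theorem Finsupp.weight_le_degree_mul {σ : Type*} (w : σ → ℕ) {m : σ →₀ ℕ} {c : ℕ}
    (h : ∀ j ∈ m.support, w j ≤ c) : weight w m ≤ degree m * c := by
  rw [weight_apply, degree_apply, Finset.sum_mul]
  exact Finset.sum_le_sum fun j hj => Nat.mul_le_mul_left _ (h j hj)

namespace MvPolynomial

variable {R σ : Type*} [CommRing R] {w : σ → ℕ}

variable (R w) in
def restrictWeightedDegree (e : ℤ) : Submodule R (MvPolynomial σ R) :=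
  restrictSupport R {m | (Finsupp.weight w m : ℤ) ≤ e}

theorem restrictWeightedDegree_mono {e e' : ℤ} (h : e ≤ e') :
    restrictWeightedDegree R w e ≤ restrictWeightedDegree R w e' :=
  restrictSupport_mono R fun _ hm => le_trans hm h

theorem restrictWeightedDegree_eq_bot {e : ℤ} (he : e < 0) :
    restrictWeightedDegree R w e = ⊥ := by
  refine eq_bot_iff.2 fun p hp => ?_
  rw [Submodule.mem_bot, ← support_eq_empty, Finset.eq_empty_iff_forall_notMem]
  intro m hm
  have : (Finsupp.weight w m : ℤ) ≤ e := hp hm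
  omega

open scoped Pointwise in
theorem mul_mem_restrictWeightedDegree {e₁ e₂ : ℤ} {p q : MvPolynomial σ R}
    (hp : p ∈ restrictWeightedDegree R w e₁) (hq : q ∈ restrictWeightedDegree R w e₂) :
    p * q ∈ restrictWeightedDegree R w (e₁ + e₂) := by
  have hsum :
      {m | (Finsupp.weight w m : ℤ) ≤ e₁} + {m | (Finsupp.weight w m : ℤ) ≤ e₂} ⊆
        {m : σ →₀ ℕ | (Finsupp.weight w m : ℤ) ≤ e₁ + e₂} := by
    rintro _ ⟨a, ha, b, hb, rfl⟩
    simp only [Set.mem_ofPred_eq, map_add, Nat.cast_add] at ha hb ⊢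
    omega
  refine restrictSupport_mono R hsum ?_
  rw [restrictSupport_add]
  exact Submodule.mul_mem_mul hp hq

theorem monomial_mem_restrictWeightedDegree {e : ℤ} {m : σ →₀ ℕ}
    (hm : (Finsupp.weight w m : ℤ) ≤ e) (r : R) :
    monomial m r ∈ restrictWeightedDegree R w e :=
  (monomial_mem_restrictSupport R).2 (Or.inl hm)

theorem finite_restrictWeightedDegree [Finite σ] (hw : ∀ j, w j ≠ 0) (e : ℤ) :
    Module.Finite R (restrictWeightedDegree R w e) := by
  have : Set.Finite {m : σ →₀ ℕ | (Finsupp.weight w m : ℤ) ≤ e} :=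
    (Finsupp.finite_of_nat_weight_le w hw e.toNat).subset fun m hm => by
      simp only [Set.mem_ofPred_eq] at hm ⊢; omega
  have := this.to_subtype
  exact Module.Finite.of_basis (basisRestrictSupport R _)

variable (R w) in
/-- Derivations raising weighted degree by at most `t`. -/
def derivationsOfWeightLE (t : ℤ) :
    Submodule R (Derivation R (MvPolynomial σ R) (MvPolynomial σ R)) where
  carrier := {D | ∀ j, D (X j) ∈ restrictWeightedDegree R w (w j + t)}
  add_mem' hD hE j := add_mem (hD j) (hE j)
  zero_mem' _ := zero_mem _
  smul_mem' c _ hD j := Submodule.smul_mem _ c (hD j)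

theorem derivationsOfWeightLE_mono {s t : ℤ} (h : s ≤ t) :
    derivationsOfWeightLE R w s ≤ derivationsOfWeightLE R w t :=
  fun _ hD j => restrictWeightedDegree_mono (by omega) (hD j)

theorem derivationsOfWeightLE_eq_bot {t : ℤ} (ht : ∀ j, (w j : ℤ) + t < 0) :
    derivationsOfWeightLE R w t = ⊥ := by
  refine eq_bot_iff.2 fun D hD => (Submodule.mem_bot R).2 (derivation_ext fun j => ?_)
  simpa [restrictWeightedDegree_eq_bot (ht j)] using hD j

theorem map_mem_restrictWeightedDegree {t e : ℤ}
    {D : Derivation R (MvPolynomial σ R) (MvPolynomial σ R)}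
    (hD : D ∈ derivationsOfWeightLE R w t) {p : MvPolynomial σ R}
    (hp : p ∈ restrictWeightedDegree R w e) : D p ∈ restrictWeightedDegree R w (e + t) := by
  rw [restrictWeightedDegree, restrictSupport_eq_span] at hp
  induction hp using Submodule.span_induction with
  | mem _ hx =>
    obtain ⟨m, hm, rfl⟩ := hx
    have hD' : D = mkDerivation R fun j => D (X j) := derivation_ext fun j => by simp
    rw [hD', mkDerivation_monomial, one_smul]
    refine Submodule.sum_mem _ fun j hj => ?_
    have hdrop := Finsupp.weight_sub_single_add (w := w) (Finsupp.mem_support_iff.1 hj)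
    have hmon :
        monomial (m - Finsupp.single j 1) (m j : R) ∈ restrictWeightedDegree R w (e - w j) :=
      monomial_mem_restrictWeightedDegree (by simp only [Set.mem_ofPred_eq] at hm; omega) _
    rw [show e + t = e - w j + (w j + t) by ring]
    exact mul_mem_restrictWeightedDegree hmon (hD j)
  | zero => simp
  | add _ _ _ _ hp hq => simpa using add_mem hp hq
  | smul r _ _ hp => simpa using Submodule.smul_mem _ r hp

theorem lie_mem_derivationsOfWeightLE {s t : ℤ}
    {D E : Derivation R (MvPolynomial σ R) (MvPolynomial σ R)}
    (hD : D ∈ derivationsOfWeightLE R w s) (hE : E ∈ derivationsOfWeightLE R w t) :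
    ⁅D, E⁆ ∈ derivationsOfWeightLE R w (s + t) := by
  intro j
  rw [Derivation.commutator_apply]
  refine sub_mem ?_ ?_
  · simpa only [add_assoc, add_comm t s] using map_mem_restrictWeightedDegree hD (hE j)
  · simpa only [add_assoc] using map_mem_restrictWeightedDegree hE (hD j)

variable (R w) in
def weightLoweringDerivations :
    LieSubalgebra R (Derivation R (MvPolynomial σ R) (MvPolynomial σ R)) where
  __ := derivationsOfWeightLE R w (-1)
  lie_mem' hD hE :=
    derivationsOfWeightLE_mono (by norm_num) (lie_mem_derivationsOfWeightLE hD hE)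

variable (R w) in
def weightLoweringFiltration (k : ℕ) : LieIdeal R (weightLoweringDerivations R w) where
  __ := (derivationsOfWeightLE R w (-(k + 1))).comap
    (weightLoweringDerivations R w).toSubmodule.subtype
  lie_mem {D} {_} hE :=
    derivationsOfWeightLE_mono (by omega) (lie_mem_derivationsOfWeightLE D.2 hE)

theorem mem_weightLoweringFiltration {k : ℕ} {D : weightLoweringDerivations R w} :
    D ∈ weightLoweringFiltration R w k ↔
      (D : Derivation R (MvPolynomial σ R) (MvPolynomial σ R)) ∈
        derivationsOfWeightLE R w (-(k + 1)) :=
  Iff.rfl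

theorem lowerCentralSeries_le_weightLoweringFiltration (k : ℕ) :
    LieModule.lowerCentralSeries R (weightLoweringDerivations R w)
      (weightLoweringDerivations R w) k ≤ weightLoweringFiltration R w k := by
  induction k with
  | zero =>
    intro D _
    rw [mem_weightLoweringFiltration, Nat.cast_zero, zero_add]
    exact D.2
  | succ k ih =>
    rw [LieModule.lowerCentralSeries_succ, LieSubmodule.lie_le_iff]
    intro D _ E hE
    exact derivationsOfWeightLE_mono (by omega) (lie_mem_derivationsOfWeightLE D.2 (ih hE))

instance [Finite σ] : LieRing.IsNilpotent (weightLoweringDerivations R w) := by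
  have := Fintype.ofFinite σ
  refine (LieModule.isNilpotent_iff R _ _).2 ⟨∑ j, w j, eq_bot_iff.2 fun D hD => ?_⟩
  replace hD :=
    mem_weightLoweringFiltration.1 (lowerCentralSeries_le_weightLoweringFiltration _ hD)
  rw [derivationsOfWeightLE_eq_bot fun j => ?_, Submodule.mem_bot] at hD
  · exact (LieSubmodule.mem_bot D).2 (Subtype.ext hD)
  · have := Finset.single_le_sum (fun i _ => Nat.zero_le (w i)) (Finset.mem_univ j)
    omega

theorem finite_derivationsOfWeightLE [IsNoetherianRing R] [Finite σ] (hw : ∀ j, w j ≠ 0)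
    (t : ℤ) : Module.Finite R (derivationsOfWeightLE R w t) := by
  have := fun j => finite_restrictWeightedDegree (R := R) hw (w j + t)
  let f : derivationsOfWeightLE R w t →ₗ[R] ∀ j, restrictWeightedDegree R w (w j + t) :=
    { toFun D j := ⟨D.1 (X j), D.2 j⟩
      map_add' _ _ := rfl
      map_smul' _ _ := rfl }
  exact Module.Finite.of_injective f fun D E h =>
    Subtype.ext (derivation_ext fun j => congrArg Subtype.val (congrFun h j))

theorem finite_weightLoweringDerivations [IsNoetherianRing R] [Finite σ] (hw : ∀ j, w j ≠ 0) :
    Module.Finite R (weightLoweringDerivations R w) :=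
  finite_derivationsOfWeightLE hw (-1)

end MvPolynomial

theorem mem_weightLoweringDerivations_of_mem_triangular {K : Type*} [Field K] {n : ℕ}
    {D : Derivation K (MvPolynomial (Fin n) K) (MvPolynomial (Fin n) K)}
    (hD : D ∈ triangular K n) {d : ℕ} (hd : ∀ i, (D (X i)).totalDegree ≤ d) :
    D ∈ weightLoweringDerivations K fun j : Fin n => (d + 1) ^ ((j : ℕ) + 1) := by
  intro i m hm
  have hvars : ∀ j ∈ m.support, (j : ℕ) < i := fun j hj =>
    mem_supported.1 (hD i) ((mem_vars_iff_mem_support j).2 ⟨m, hm, hj⟩)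
  have hdeg : m.degree ≤ d := (le_totalDegree hm).trans (hd i)
  have hlt :
      Finsupp.weight (fun j : Fin n => (d + 1) ^ ((j : ℕ) + 1)) m < (d + 1) ^ ((i : ℕ) + 1) :=
    calc _ ≤ m.degree * (d + 1) ^ (i : ℕ) := Finsupp.weight_le_degree_mul _ fun j hj =>
            Nat.pow_le_pow_right (Nat.succ_pos d) (hvars j hj)
      _ ≤ d * (d + 1) ^ (i : ℕ) := Nat.mul_le_mul_right _ hdeg
      _ < (d + 1) * (d + 1) ^ (i : ℕ) :=
          Nat.mul_lt_mul_of_pos_right (lt_add_one d) (by positivity)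
      _ = (d + 1) ^ ((i : ℕ) + 1) := by ring
  show _ ≤ (((d + 1) ^ ((i : ℕ) + 1) : ℕ) : ℤ) + -1
  omega

theorem exists_weights_of_finite_triangular {K : Type*} [Field K] {n : ℕ}
    {S : Set (triangular K n)} (hS : S.Finite) :
    ∃ w : Fin n → ℕ, (∀ j, w j ≠ 0) ∧
      ∀ D ∈ S, (D : Derivation K (MvPolynomial (Fin n) K) (MvPolynomial (Fin n) K)) ∈
        weightLoweringDerivations K w := by
  obtain ⟨d, hd⟩ :=
    (hS.image fun D : triangular K n => Finset.univ.sup fun i => (D.1 (X i)).totalDegree).bddAbove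
  exact ⟨_, fun j => by positivity, fun D hD =>
    mem_weightLoweringDerivations_of_mem_triangular D.2 fun i =>
      (Finset.le_sup (Finset.mem_univ i)).trans (hd ⟨D, hD, rfl⟩)⟩

theorem triangular_locally_finite_and_locally_nilpotent_general
    (K : Type*) [Field K] (n : ℕ)
    (S : Set ↥(triangular K n)) (hS : S.Finite) :
    FiniteDimensional K ↥(LieSubalgebra.lieSpan K ↥(triangular K n) S) ∧
      LieModule.IsNilpotent ↥(LieSubalgebra.lieSpan K ↥(triangular K n) S)
        ↥(LieSubalgebra.lieSpan K ↥(triangular K n) S) := by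
  obtain ⟨w, hw, hSw⟩ := exists_weights_of_finite_triangular hS
  have hspan : LieSubalgebra.lieSpan K (triangular K n) S ≤
      (weightLoweringDerivations K w).comap (triangular K n).incl :=
    LieSubalgebra.lieSpan_le.2 hSw
  let f : LieSubalgebra.lieSpan K (triangular K n) S →ₗ⁅K⁆ weightLoweringDerivations K w :=
    { toFun D := ⟨D.1.1, hspan D.2⟩
      map_add' _ _ := rfl
      map_smul' _ _ := rfl
      map_lie' := rfl }
  have hf : Function.Injective f := fun D E h =>
    Subtype.ext (Subtype.ext (congrArg Subtype.val h :))
  have := finite_weightLoweringDerivations (R := K) hw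
  exact ⟨Module.Finite.of_injective f.toLinearMap hf, hf.lieAlgebra_isNilpotent⟩

/-- For `n ≥ 2`, the Lie algebra `u_n` is locally finite dimensional and
locally nilpotent: the Lie subalgebra generated by any finite subset of `u_n` is finite
dimensional and nilpotent. -/
theorem triangular_locally_finite_and_locally_nilpotent
    (K : Type*) [Field K] [CharZero K] (n : ℕ) (hn : 2 ≤ n)
    (S : Set ↥(triangular K n)) (hS : S.Finite) :
    FiniteDimensional K ↥(LieSubalgebra.lieSpan K ↥(triangular K n) S) ∧
      LieModule.IsNilpotent ↥(LieSubalgebra.lieSpan K ↥(triangular K n) S)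
        ↥(LieSubalgebra.lieSpan K ↥(triangular K n) S) :=
  triangular_locally_finite_and_locally_nilpotent_general K n S hS
end
end

section
/- (1) Every nonzero ideal I of the Lie algebra u_∞ contains the ideal u_{∞,m} = ⊕_{j≥m} P_{j-1}∂_j for some integer m ≥ 1. (2) The set of Lie ideals of u_∞ is totally ordered by inclusion, i.e., u_∞ is a uniserial Lie algebra. -/
open MvPolynomial

noncomputable section


theorem Derivation.mem_supported_of_forall_mem'
    {K : Type*} [CommRing K] {σ : Type*} (s : Set σ)
    (D : Derivation K (MvPolynomial σ K) (MvPolynomial σ K))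
    (h : ∀ j ∈ s, D (X j) ∈ supported K s)
    {p : MvPolynomial σ K} (hp : p ∈ supported K s) : D p ∈ supported K s := by
  rw [supported_eq_adjoin_X] at hp
  induction hp using Algebra.adjoin_induction with
  | mem x hx =>
    obtain ⟨j, hj, rfl⟩ := hx
    exact h j hj
  | algebraMap r =>
    rw [Derivation.map_algebraMap]
    exact zero_mem _
  | add x y hx hy ihx ihy =>
    rw [map_add]
    exact add_mem ihx ihy
  | mul x y hx hy ihx ihy =>
    rw [Derivation.leibniz, smul_eq_mul, smul_eq_mul]
    rw [← supported_eq_adjoin_X] at hx hy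
    exact add_mem (mul_mem hx ihy) (mul_mem hy ihx)

/-- The defining condition for the Lie algebra `u_∞ = ⊕_{i ≥ 1} P_{i-1}∂_i` of triangular
polynomial derivations of `P_∞ = K[x₁,x₂,…]` (variables indexed by `ℕ`, zero-based):
a derivation `D` belongs to `u_∞` iff each `D (X i)` only involves the variables `X j`
with `j < i`, and all but finitely many of the `D (X i)` vanish (so that `D` is a *finite*
sum `Σ a_i ∂_i` with `a_i ∈ P_{i-1}`). -/
def triSetInf (K : Type*) [Field K] :
    Set (Derivation K (MvPolynomial ℕ K) (MvPolynomial ℕ K)) :=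
  {D | (∀ i : ℕ, D (X i) ∈ supported K {j : ℕ | j < i}) ∧ {i : ℕ | D (X i) ≠ 0}.Finite}

theorem triSetInf_stable {K : Type*} [Field K]
    {D : Derivation K (MvPolynomial ℕ K) (MvPolynomial ℕ K)}
    (hD : D ∈ triSetInf K) (i : ℕ) :
    ∀ j ∈ {j' : ℕ | j' < i}, D (X j) ∈ supported K {j' : ℕ | j' < i} := by
  intro j hj
  have hj' : j < i := hj
  refine supported_mono (t := {j' : ℕ | j' < i}) ?_ (hD.1 j)
  intro l hl
  have hl' : l < j := hl
  exact lt_trans hl' hj'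

/-- The Lie algebra `u_∞ = ⊕_{i ≥ 1} P_{i-1}∂_i` of triangular polynomial derivations of
the polynomial algebra `P_∞ = K[x₁,x₂,…]` in countably many variables, as a Lie
subalgebra of the Lie algebra of all `K`-derivations of `P_∞`. -/
def triangularInf (K : Type*) [Field K] :
    LieSubalgebra K (Derivation K (MvPolynomial ℕ K) (MvPolynomial ℕ K)) where
  carrier := triSetInf K
  add_mem' := by
    intro a b ha hb
    constructor
    · intro i
      rw [Derivation.add_apply]
      exact add_mem (ha.1 i) (hb.1 i)
    · refine Set.Finite.subset (ha.2.union hb.2) ?_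
      intro i hi
      by_contra hcon
      simp only [Set.mem_union, Set.mem_setOf_eq, not_or, not_not] at hcon
      exact hi (by rw [Derivation.add_apply, hcon.1, hcon.2, add_zero])
  zero_mem' := by
    constructor
    · intro i
      rw [Derivation.zero_apply]
      exact zero_mem _
    · refine Set.Finite.subset (Set.finite_empty) ?_
      intro i hi
      exact hi (Derivation.zero_apply _)
  smul_mem' := by
    intro c a ha
    constructor
    · intro i
      rw [Derivation.smul_apply]
      exact Subalgebra.smul_mem _ (ha.1 i) c
    · refine Set.Finite.subset ha.2 ?_
      intro i hi
      by_contra hcon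
      simp only [Set.mem_setOf_eq, not_not] at hcon
      exact hi (by rw [Derivation.smul_apply, hcon, smul_zero])
  lie_mem' := by
    intro a b ha hb
    constructor
    · intro i
      rw [Derivation.commutator_apply]
      exact sub_mem
        (Derivation.mem_supported_of_forall_mem' _ a (triSetInf_stable ha i) (hb.1 i))
        (Derivation.mem_supported_of_forall_mem' _ b (triSetInf_stable hb i) (ha.1 i))
    · refine Set.Finite.subset (ha.2.union hb.2) ?_
      intro i hi
      by_contra hcon
      simp only [Set.mem_union, Set.mem_setOf_eq, not_or, not_not] at hcon
      refine hi ?_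
      rw [Derivation.commutator_apply, hcon.1, hcon.2, map_zero, map_zero, sub_zero]


/-!
Call the `m`-th slice of a Lie ideal `I` the space of components `a (X m)` of those `a ∈ I` with
`a (X j) = 0` for `j < m`. Bracketing with `p ∂_i` (`i < m`, `p ∈ P_i`) shows that a slice is
stable under the triangular derivations of `P_m = K[X_0, …, X_{m-1}]`, and such stable subspaces
of `P_m` are totally ordered. The latter goes by induction on `m`, writing elements as
polynomials in `t = X_{m-1}` over `P_{m-1}`: if `W` contains an element of `t`-degree `d` with
leading coefficient `c`, differentiating in `t` (multiplying by `p ∈ P_{m-1}` once) puts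
`p c t^e + (lower terms)` into `W` for every `e < d`, and the induction hypothesis applied to
`{w ∈ P_{m-1} | w t^e ∈ W}` gives `P_{m-1} t^e ⊆ W`.
Comparing with the constants, a nonzero slice contains `1`, i.e. `I` contains some
`a = ∂_m + ∑_{i > m} a_i ∂_i`. Such an `a` maps each `P_j`, `j > m`, onto itself, so the
brackets `⁅h ∂_j, a⁆` yield, by downward induction on `j`, every element vanishing on
`X_0, …, X_m`. For (2), compare the slices of two ideals at the smaller of their first indices.
-/

namespace MvPolynomial

section Supported

variable {σ R : Type*}

theorem derivation_eq_zero_of_mem_supported [CommSemiring R] {A : Type*} [AddCommMonoid A]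
    [Module R A] [Module (MvPolynomial σ R) A] {s : Set σ}
    {D : Derivation R (MvPolynomial σ R) A} (hD : ∀ i ∈ s, D (X i) = 0)
    {f : MvPolynomial σ R} (hf : f ∈ supported R s) : D f = 0 :=
  derivation_eq_zero_of_forall_mem_vars fun i hi => hD i (mem_supported.1 hf hi)

theorem pderiv_eq_zero_of_mem_supported [CommSemiring R] {s : Set σ} {i : σ} (hi : i ∉ s)
    {f : MvPolynomial σ R} (hf : f ∈ supported R s) : pderiv i f = 0 :=
  pderiv_eq_zero_of_notMem_vars fun h => hi (mem_supported.1 hf h)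

theorem pderiv_mem_supported [CommRing R] {s : Set σ} (i : σ) {f : MvPolynomial σ R}
    (hf : f ∈ supported R s) : pderiv i f ∈ supported R s := by
  classical
  refine Derivation.mem_supported_of_forall_mem' s _ (fun j _ => ?_) hf
  rcases eq_or_ne j i with rfl | hji
  · simp
  · simp [pderiv_X_of_ne hji]

theorem supported_Iio_zero [CommSemiring R] : supported R (Set.Iio 0) = ⊥ := by
  rw [← supported_empty]
  congr
  ext j
  simp

end Supported

section OneVariable

variable {R : Type*} [CommSemiring R]

/-- `f` viewed as a polynomial in `X t` whose coefficients do not involve `X t`. -/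
def toPolyIn (t : ℕ) : MvPolynomial ℕ R →ₐ[R] Polynomial (MvPolynomial ℕ R) :=
  aeval fun j => if j = t then Polynomial.X else Polynomial.C (X j)

@[simp]
theorem toPolyIn_X_self (t : ℕ) : toPolyIn t (X t : MvPolynomial ℕ R) = Polynomial.X := by
  simp [toPolyIn]

theorem toPolyIn_X_of_ne {t j : ℕ} (h : j ≠ t) :
    toPolyIn t (X j : MvPolynomial ℕ R) = Polynomial.C (X j) := by
  simp [toPolyIn, h]

@[simp]
theorem toPolyIn_C (t : ℕ) (a : R) : toPolyIn t (C a) = Polynomial.C (C a) :=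
  (toPolyIn t).commutes a

@[simp]
theorem eval_toPolyIn (t : ℕ) (f : MvPolynomial ℕ R) : (toPolyIn t f).eval (X t) = f := by
  induction f using MvPolynomial.induction_on with
  | C a => simp
  | add p q hp hq => simp [hp, hq]
  | mul_X p i hp =>
    rcases eq_or_ne i t with rfl | h
    · simp [hp]
    · simp [hp, toPolyIn_X_of_ne h]

theorem toPolyIn_ne_zero {t : ℕ} {f : MvPolynomial ℕ R} (hf : f ≠ 0) : toPolyIn t f ≠ 0 :=
  fun h => hf (by rw [← eval_toPolyIn t f, h, Polynomial.eval_zero])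

theorem toPolyIn_eq_C {s : Set ℕ} {t : ℕ} (ht : t ∉ s) {f : MvPolynomial ℕ R}
    (hf : f ∈ supported R s) : toPolyIn t f = Polynomial.C f := by
  induction hf using Algebra.adjoin_induction with
  | mem x hx =>
    obtain ⟨j, hj, rfl⟩ := hx
    exact toPolyIn_X_of_ne (ne_of_mem_of_not_mem hj ht)
  | algebraMap r => exact toPolyIn_C t r
  | add x y _ _ hx hy => rw [map_add, hx, hy, map_add]
  | mul x y _ _ hx hy => rw [map_mul, hx, hy, map_mul]

theorem coeff_toPolyIn_mem_supported {t : ℕ} {f : MvPolynomial ℕ R}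
    (hf : f ∈ supported R (Set.Iio (t + 1))) (k : ℕ) :
    (toPolyIn t f).coeff k ∈ supported R (Set.Iio t) := by
  induction hf using Algebra.adjoin_induction generalizing k with
  | mem x hx =>
    obtain ⟨j, hj, rfl⟩ := hx
    rcases eq_or_ne j t with rfl | h
    · rw [toPolyIn_X_self, Polynomial.coeff_X]
      split_ifs <;> simp
    · rw [toPolyIn_X_of_ne h, Polynomial.coeff_C]
      split_ifs
      · exact Algebra.subset_adjoin ⟨j, lt_of_le_of_ne (Nat.lt_succ_iff.1 hj) h, rfl⟩
      · exact zero_mem _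
  | algebraMap r =>
    rw [AlgHom.commutes, Polynomial.algebraMap_apply, Polynomial.coeff_C]
    split_ifs
    · exact Subalgebra.algebraMap_mem _ r
    · exact zero_mem _
  | add x y _ _ hx hy => rw [map_add, Polynomial.coeff_add]; exact add_mem (hx k) (hy k)
  | mul x y _ _ hx hy =>
    rw [map_mul, Polynomial.coeff_mul]
    exact sum_mem fun c _ => mul_mem (hx c.1) (hy c.2)

theorem toPolyIn_pderiv_self (t : ℕ) (f : MvPolynomial ℕ R) :
    toPolyIn t (pderiv t f) = Polynomial.derivative (toPolyIn t f) := by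
  induction f using MvPolynomial.induction_on with
  | C a => simp
  | add p q hp hq => simp [hp, hq]
  | mul_X p i hp =>
    rcases eq_or_ne i t with rfl | h
    · simp [hp, Polynomial.derivative_mul, mul_comm]
    · simp [hp, Polynomial.derivative_mul, toPolyIn_X_of_ne h, h, mul_comm]

theorem eq_sum_coeff_toPolyIn_mul_X_pow {t n : ℕ} {f : MvPolynomial ℕ R}
    (hn : (toPolyIn t f).natDegree < n) :
    f = ∑ k ∈ Finset.range n, (toPolyIn t f).coeff k * X t ^ k := by
  conv_lhs => rw [← eval_toPolyIn t f, Polynomial.eval_eq_sum_range' hn]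

variable {M : Submodule R (MvPolynomial ℕ R)} {t : ℕ} {f : MvPolynomial ℕ R}

theorem mem_of_coeff_toPolyIn_mul_X_pow_mem
    (h : ∀ k ≤ (toPolyIn t f).natDegree, (toPolyIn t f).coeff k * X t ^ k ∈ M) : f ∈ M := by
  rw [eq_sum_coeff_toPolyIn_mul_X_pow (f := f) (Nat.lt_succ_self _)]
  exact sum_mem fun k hk => h k (Nat.lt_succ_iff.1 (Finset.mem_range.1 hk))

theorem mem_of_forall_mul_X_pow_mem (hf : f ∈ supported R (Set.Iio (t + 1)))
    (h : ∀ k, ∀ w ∈ supported R (Set.Iio t), w * X t ^ k ∈ M) : f ∈ M :=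
  mem_of_coeff_toPolyIn_mul_X_pow_mem fun k _ => h k _ (coeff_toPolyIn_mem_supported hf k)

end OneVariable

theorem coeff_toPolyIn_mul_X_pow_mem {R : Type*} [CommRing R]
    {M : Submodule R (MvPolynomial ℕ R)} {t d : ℕ} {f : MvPolynomial ℕ R} (hf : f ∈ M)
    (hd : (toPolyIn t f).natDegree ≤ d) (h : ∀ k < d, (toPolyIn t f).coeff k * X t ^ k ∈ M) :
    (toPolyIn t f).coeff d * X t ^ d ∈ M := by
  rw [eq_sum_coeff_toPolyIn_mul_X_pow (Nat.lt_succ_of_le hd), Finset.sum_range_succ] at hf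
  have hlow : ∑ k ∈ Finset.range d, (toPolyIn t f).coeff k * X t ^ k ∈ M :=
    sum_mem fun k hk => h k (Finset.mem_range.1 hk)
  exact (Submodule.add_mem_iff_right M hlow).1 hf

section Triangular

variable {K : Type*} [Field K]

-- The `u_m`-submodules of `P_m = K[X_0, …, X_{m-1}]`.
structure IsTriangularSubmodule (m : ℕ) (W : Submodule K (MvPolynomial ℕ K)) : Prop where
  mem_supported : ∀ w ∈ W, w ∈ supported K (Set.Iio m)
  mul_pderiv_mem : ∀ i < m, ∀ p ∈ supported K (Set.Iio i), ∀ w ∈ W, p * pderiv i w ∈ W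

def colonXPow (t e : ℕ) (W : Submodule K (MvPolynomial ℕ K)) :
    Submodule K (MvPolynomial ℕ K) :=
  Subalgebra.toSubmodule (supported K (Set.Iio t)) ⊓ W.comap (LinearMap.mulRight K (X t ^ e))

variable {t e : ℕ} {W : Submodule K (MvPolynomial ℕ K)}

theorem mem_colonXPow {w : MvPolynomial ℕ K} :
    w ∈ colonXPow t e W ↔ w ∈ supported K (Set.Iio t) ∧ w * X t ^ e ∈ W :=
  Iff.rfl

theorem IsTriangularSubmodule.colonXPow (hW : IsTriangularSubmodule (t + 1) W) (e : ℕ) :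
    IsTriangularSubmodule t (colonXPow t e W) where
  mem_supported _ hw := (mem_colonXPow.1 hw).1
  mul_pderiv_mem i hi p hp w hw := by
    obtain ⟨hw, hwe⟩ := mem_colonXPow.1 hw
    refine mem_colonXPow.2 ⟨mul_mem (supported_mono (Set.Iio_subset_Iio hi.le) hp)
      (pderiv_mem_supported i hw), ?_⟩
    have hXt : pderiv i (X t ^ e : MvPolynomial ℕ K) = 0 := by
      simp [pderiv_X_of_ne (Nat.ne_of_gt hi)]
    have := hW.mul_pderiv_mem i (by omega) p hp _ hwe
    rw [Derivation.leibniz, hXt, smul_zero, zero_add, smul_eq_mul] at this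
    convert this using 1
    ring

theorem mem_iff_leadingCoeff_mem_colonXPow {f : MvPolynomial ℕ K}
    (hf : f ∈ supported K (Set.Iio (t + 1)))
    (hlow : ∀ k < (toPolyIn t f).natDegree, ∀ w ∈ supported K (Set.Iio t), w * X t ^ k ∈ W) :
    f ∈ W ↔ (toPolyIn t f).leadingCoeff ∈ colonXPow t (toPolyIn t f).natDegree W := by
  have hcoeff := coeff_toPolyIn_mem_supported hf
  refine ⟨fun hfW => mem_colonXPow.2 ⟨hcoeff _, coeff_toPolyIn_mul_X_pow_mem hfW le_rfl
    fun k hk => hlow k hk _ (hcoeff k)⟩, fun hlead => mem_of_coeff_toPolyIn_mul_X_pow_mem (t := t)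
    fun k hk => ?_⟩
  rcases hk.lt_or_eq with hk | rfl
  · exact hlow k hk _ (hcoeff k)
  · exact (mem_colonXPow.1 hlead).2

variable [CharZero K]

theorem IsTriangularSubmodule.exists_mem_natDegree_le_coeff_eq
    (hW : IsTriangularSubmodule (t + 1) W) {q p : MvPolynomial ℕ K} {k : ℕ} (hq : q ∈ W)
    (hdeg : (toPolyIn t q).natDegree ≤ k + 1) (hp : p ∈ supported K (Set.Iio t)) :
    ∃ q' ∈ W, (toPolyIn t q').natDegree ≤ k ∧
      (toPolyIn t q').coeff k = p * (toPolyIn t q).coeff (k + 1) := by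
  have hCp : toPolyIn t p = Polynomial.C p := toPolyIn_eq_C (by simp) hp
  refine ⟨((k : K) + 1)⁻¹ • (p * pderiv t q),
    W.smul_mem _ (hW.mul_pderiv_mem t (Nat.lt_succ_self t) p hp q hq), ?_, ?_⟩
  · rw [map_smul, map_mul, hCp, toPolyIn_pderiv_self]
    exact (Polynomial.natDegree_smul_le _ _).trans ((Polynomial.natDegree_C_mul_le _ _).trans
      ((Polynomial.natDegree_derivative_le _).trans (by omega)))
  · have hk : ((k : K) + 1) ≠ 0 := Nat.cast_add_one_ne_zero k
    have hcast : ((k : MvPolynomial ℕ K) + 1) = algebraMap K _ ((k : K) + 1) := by simp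
    have hinv : algebraMap K (MvPolynomial ℕ K) ((k : K) + 1)⁻¹ * algebraMap K _ ((k : K) + 1)
        = 1 := by rw [← map_mul, inv_mul_cancel₀ hk, map_one]
    rw [map_smul, map_mul, hCp, toPolyIn_pderiv_self, Polynomial.coeff_smul,
      Polynomial.coeff_C_mul, Polynomial.coeff_derivative, hcast, Algebra.smul_def]
    linear_combination (p * (toPolyIn t q).coeff (k + 1)) * hinv

theorem IsTriangularSubmodule.exists_mem_natDegree_le_coeff_eq_leadingCoeff
    (hW : IsTriangularSubmodule (t + 1) W) {h p : MvPolynomial ℕ K} (hh : h ∈ W)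
    (he : e < (toPolyIn t h).natDegree) (hp : p ∈ supported K (Set.Iio t)) :
    ∃ q ∈ W, (toPolyIn t q).natDegree ≤ e ∧
      (toPolyIn t q).coeff e = p * (toPolyIn t h).leadingCoeff := by
  have descend : ∀ n, ∀ q ∈ W, (toPolyIn t q).natDegree ≤ e + 1 + n →
      ∃ q' ∈ W, (toPolyIn t q').natDegree ≤ e + 1 ∧
        (toPolyIn t q').coeff (e + 1) = (toPolyIn t q).coeff (e + 1 + n) := by
    intro n
    induction n with
    | zero => exact fun q hq hd => ⟨q, hq, hd, rfl⟩
    | succ n ih =>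
      intro q hq hd
      obtain ⟨q₁, hq₁, hd₁, hc₁⟩ :=
        hW.exists_mem_natDegree_le_coeff_eq (k := e + 1 + n) hq hd (one_mem _)
      obtain ⟨q', hq', hd', hc'⟩ := ih q₁ hq₁ hd₁
      exact ⟨q', hq', hd', by rw [hc', hc₁, one_mul]; rfl⟩
  obtain ⟨q₁, hq₁, hd₁, hc₁⟩ := descend _ h hh (Nat.add_sub_of_le he).ge
  obtain ⟨q, hq, hd, hc⟩ := hW.exists_mem_natDegree_le_coeff_eq hq₁ hd₁ hp
  exact ⟨q, hq, hd, by rw [hc, hc₁, Nat.add_sub_of_le he]; rfl⟩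

-- `hP` is the level-`t` case of `IsTriangularSubmodule.mem_of_forall_mul_mem`, which is proved
-- by induction on the level through this lemma.
theorem IsTriangularSubmodule.mul_X_pow_mem_of_lt_natDegree_aux
    (hP : ∀ V, IsTriangularSubmodule t V → ∀ u ≠ 0,
      (∀ p ∈ supported K (Set.Iio t), p * u ∈ V) → ∀ w ∈ supported K (Set.Iio t), w ∈ V)
    (hW : IsTriangularSubmodule (t + 1) W) {h : MvPolynomial ℕ K} (hh : h ∈ W) :
    ∀ e < (toPolyIn t h).natDegree, ∀ w ∈ supported K (Set.Iio t), w * X t ^ e ∈ W := by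
  intro e
  induction e using Nat.strong_induction_on with
  | _ e ih =>
    intro he w hw
    have hlead : (toPolyIn t h).leadingCoeff ≠ 0 :=
      Polynomial.leadingCoeff_ne_zero.2 (Polynomial.ne_zero_of_natDegree_gt he)
    refine (mem_colonXPow.1 (hP _ (hW.colonXPow e) _ hlead (fun p hp => ?_) w hw)).2
    obtain ⟨q, hq, hd, hc⟩ := hW.exists_mem_natDegree_le_coeff_eq_leadingCoeff hh he hp
    have hqs := hW.mem_supported q hq
    rw [← hc]
    exact mem_colonXPow.2 ⟨coeff_toPolyIn_mem_supported hqs e, coeff_toPolyIn_mul_X_pow_mem hq hd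
      fun k hk => ih k hk (hk.trans he) _ (coeff_toPolyIn_mem_supported hqs k)⟩

theorem IsTriangularSubmodule.mem_of_forall_mul_mem {m : ℕ} (hW : IsTriangularSubmodule m W)
    {u : MvPolynomial ℕ K} (hu : u ≠ 0) (hmul : ∀ p ∈ supported K (Set.Iio m), p * u ∈ W)
    {w : MvPolynomial ℕ K} (hw : w ∈ supported K (Set.Iio m)) : w ∈ W := by
  induction m generalizing W u w with
  | zero =>
    have hu₀ := hW.mem_supported u (by simpa using hmul 1 (one_mem _))
    rw [supported_Iio_zero, Algebra.mem_bot] at hu₀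
    obtain ⟨c, rfl⟩ := hu₀
    have hc : c ≠ 0 := by rintro rfl; exact hu (map_zero _)
    have := hmul (w * algebraMap K _ c⁻¹) (mul_mem hw (Subalgebra.algebraMap_mem _ _))
    rwa [mul_assoc, ← map_mul, inv_mul_cancel₀ hc, map_one, mul_one] at this
  | succ t ih =>
    refine mem_of_forall_mul_X_pow_mem hw fun k w hw => ?_
    have hdeg : k < (toPolyIn t (X t ^ (k + 1) * u)).natDegree := by
      have hcoeff : (toPolyIn t (X t ^ (k + 1) * u)).coeff ((toPolyIn t u).natDegree + (k + 1))
          ≠ 0 := by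
        rw [map_mul, map_pow, toPolyIn_X_self, Polynomial.coeff_X_pow_mul]
        exact Polynomial.leadingCoeff_ne_zero.2 (toPolyIn_ne_zero hu)
      have := Polynomial.le_natDegree_of_ne_zero hcoeff
      omega
    exact hW.mul_X_pow_mem_of_lt_natDegree_aux (fun V hV u hu hmul w hw => ih hV hu hmul hw)
      (hmul _ (pow_mem (X_mem_supported.2 (Set.mem_Iio.2 (Nat.lt_succ_self t))) _)) k hdeg w hw

theorem IsTriangularSubmodule.mul_X_pow_mem_of_lt_natDegree
    (hW : IsTriangularSubmodule (t + 1) W) {h : MvPolynomial ℕ K} (hh : h ∈ W) :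
    ∀ e < (toPolyIn t h).natDegree, ∀ w ∈ supported K (Set.Iio t), w * X t ^ e ∈ W :=
  hW.mul_X_pow_mem_of_lt_natDegree_aux
    (fun _ hV _ hu hmul _ hw => hV.mem_of_forall_mul_mem hu hmul hw) hh

theorem IsTriangularSubmodule.le_total {m : ℕ} {V : Submodule K (MvPolynomial ℕ K)}
    (hV : IsTriangularSubmodule m V) (hW : IsTriangularSubmodule m W) : V ≤ W ∨ W ≤ V := by
  induction m generalizing V W with
  | zero =>
    refine or_iff_not_imp_left.2 fun hVW g hgW => ?_
    obtain ⟨f, hfV, hfW⟩ := SetLike.not_le_iff_exists.1 hVW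
    have hf : f ≠ 0 := by rintro rfl; exact hfW (zero_mem _)
    refine hV.mem_of_forall_mul_mem hf (fun p hp => ?_) (hW.mem_supported g hgW)
    rw [supported_Iio_zero, Algebra.mem_bot] at hp
    obtain ⟨c, rfl⟩ := hp
    rw [← Algebra.smul_def]
    exact V.smul_mem c hfV
  | succ t ih =>
    refine or_iff_not_imp_left.2 fun hVW g hgW => ?_
    obtain ⟨f, hfV, hfW⟩ := SetLike.not_le_iff_exists.1 hVW
    have hf := hV.mem_supported f hfV
    have hg := hW.mem_supported g hgW
    have hVlow := hV.mul_X_pow_mem_of_lt_natDegree hfV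
    have hWlow := hW.mul_X_pow_mem_of_lt_natDegree hgW
    rcases lt_trichotomy (toPolyIn t f).natDegree (toPolyIn t g).natDegree with hlt | heq | hgt
    · exact absurd (mem_of_coeff_toPolyIn_mul_X_pow_mem fun k hk =>
        hWlow k (hk.trans_lt hlt) _ (coeff_toPolyIn_mem_supported hf k)) hfW
    · have hfV' := (mem_iff_leadingCoeff_mem_colonXPow hf hVlow).1 hfV
      have hgW' := (mem_iff_leadingCoeff_mem_colonXPow hg hWlow).1 hgW
      rw [← heq] at hgW'
      rcases ih (hV.colonXPow _) (hW.colonXPow _) with hc | hc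
      · exact absurd ((mem_iff_leadingCoeff_mem_colonXPow hf (heq ▸ hWlow)).2 (hc hfV')) hfW
      · refine (mem_iff_leadingCoeff_mem_colonXPow hg (heq ▸ hVlow)).2 ?_
        rw [← heq]
        exact hc hgW'
    · exact mem_of_coeff_toPolyIn_mul_X_pow_mem fun k hk =>
        hVlow k (hk.trans_lt hgt) _ (coeff_toPolyIn_mem_supported hg k)

theorem IsTriangularSubmodule.one_mem {m : ℕ} (hW : IsTriangularSubmodule m W) (hW₀ : W ≠ ⊥) :
    (1 : MvPolynomial ℕ K) ∈ W := by
  have hK : IsTriangularSubmodule m (K ∙ (1 : MvPolynomial ℕ K)) := by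
    refine ⟨fun w hw => ?_, fun i _ p _ w hw => ?_⟩ <;>
      obtain ⟨c, rfl⟩ := Submodule.mem_span_singleton.1 hw
    · exact Subalgebra.smul_mem _ (Subalgebra.one_mem _) c
    · simp
  rcases hW.le_total hK with hle | hle
  · obtain ⟨f, hf, hf₀⟩ := Submodule.exists_mem_ne_zero_of_ne_bot hW₀
    obtain ⟨c, rfl⟩ := Submodule.mem_span_singleton.1 (hle hf)
    have hc : c ≠ 0 := by rintro rfl; exact hf₀ (zero_smul _ _)
    simpa [smul_smul, inv_mul_cancel₀ hc] using W.smul_mem c⁻¹ hf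
  · exact hle (Submodule.mem_span_singleton_self 1)

end Triangular

-- For `j = m + 1`, `D` acts on `P_{m+1}` as `∂_m`. In the inductive step
-- `D (A * X_j ^ (k + 1)) = D A * X_j ^ (k + 1) + (k + 1) • (A * D (X_j) * X_j ^ k)` with
-- `A * D (X_j) ∈ P_j`, so induction on `k` applies.
theorem exists_mem_supported_derivation_eq {K : Type*} [Field K] [CharZero K]
    (D : Derivation K (MvPolynomial ℕ K) (MvPolynomial ℕ K))
    (hD : ∀ l, D (X l) ∈ supported K (Set.Iio l)) {m : ℕ} (hlow : ∀ l < m, D (X l) = 0)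
    (hm : D (X m) = 1) {j : ℕ} (hj : m < j) {f : MvPolynomial ℕ K}
    (hf : f ∈ supported K (Set.Iio j)) : ∃ h ∈ supported K (Set.Iio j), D h = f := by
  suffices ∀ f ∈ supported K (Set.Iio j),
      f ∈ (Subalgebra.toSubmodule (supported K (Set.Iio j))).map D.toLinearMap by
    simpa using this f hf
  clear f hf
  induction j, hj using Nat.le_induction with
  | base =>
    intro f hf
    refine mem_of_forall_mul_X_pow_mem hf fun k w hw => Submodule.mem_map.2
      ⟨((k : K) + 1)⁻¹ • (w * X m ^ (k + 1)), ?_, ?_⟩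
    · exact Subalgebra.smul_mem _ (mul_mem (supported_mono (Set.Iio_subset_Iio (by omega)) hw)
        (pow_mem (X_mem_supported.2 (Set.mem_Iio.2 (Nat.lt_succ_self m))) _)) _
    · have hDw : D w = 0 := derivation_eq_zero_of_mem_supported hlow hw
      have hk : ((k : K) + 1) ≠ 0 := Nat.cast_add_one_ne_zero k
      simp only [Derivation.coeFn_coe, map_smul, Derivation.leibniz, Derivation.leibniz_pow, hm,
        hDw, Nat.add_sub_cancel, smul_eq_mul, mul_one, mul_zero, add_zero]
      rw [mul_smul_comm, ← Nat.cast_smul_eq_nsmul K, smul_smul, Nat.cast_succ,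
        inv_mul_cancel₀ hk, one_smul]
  | succ j hj ih =>
    intro f hf
    refine mem_of_forall_mul_X_pow_mem hf fun k => ?_
    induction k with
    | zero =>
      intro w hw
      obtain ⟨A, hA, hAw⟩ := Submodule.mem_map.1 (ih w hw)
      rw [pow_zero, mul_one]
      exact Submodule.mem_map.2 ⟨A, supported_mono (Set.Iio_subset_Iio (Nat.le_succ j)) hA, hAw⟩
    | succ k ihk =>
      intro w hw
      obtain ⟨A, hA, hAw⟩ := Submodule.mem_map.1 (ih w hw)
      have hAX : A * X j ^ (k + 1) ∈ supported K (Set.Iio (j + 1)) :=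
        mul_mem (supported_mono (Set.Iio_subset_Iio (Nat.le_succ j)) hA)
          (pow_mem (X_mem_supported.2 (Set.mem_Iio.2 (Nat.lt_succ_self j))) _)
      have hcorr := Submodule.smul_mem _ ((k : K) + 1) (ihk _ (mul_mem hA (hD j)))
      have hsum := sub_mem (Submodule.mem_map_of_mem (f := D.toLinearMap) hAX) hcorr
      convert hsum using 1
      simp only [Derivation.coeFn_coe, Derivation.leibniz, Derivation.leibniz_pow,
        Nat.add_sub_cancel, smul_eq_mul, ← hAw]
      rw [← Nat.cast_smul_eq_nsmul K]
      simp only [Algebra.smul_def, map_add, map_natCast, map_one]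
      push_cast
      ring

end MvPolynomial

namespace triangularInf

variable {K : Type*} [Field K]

theorem smul_pderiv_mem {j : ℕ} {h : MvPolynomial ℕ K} (hh : h ∈ supported K (Set.Iio j)) :
    h • pderiv j ∈ triangularInf K := by
  classical
  refine ⟨fun i => ?_, (Set.finite_singleton j).subset fun i hi => ?_⟩
  · rcases eq_or_ne i j with rfl | hij
    · simp only [pderiv_X_self, Derivation.smul_apply, smul_eq_mul, mul_one]
      exact hh
    · simp [pderiv_X_of_ne hij]
  · by_contra hij
    exact hi (by simp [pderiv_X_of_ne hij])

theorem smul_pderiv_lie_apply_X (D : Derivation K (MvPolynomial ℕ K) (MvPolynomial ℕ K))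
    (h : MvPolynomial ℕ K) (i j : ℕ) :
    ⁅(h • pderiv j : Derivation K (MvPolynomial ℕ K) (MvPolynomial ℕ K)), D⁆ (X i) =
      h * pderiv j (D (X i)) - if i = j then D h else 0 := by
  rw [Derivation.commutator_apply, Derivation.smul_apply, smul_eq_mul]
  split_ifs with hij
  · simp [hij]
  · simp [pderiv_X_of_ne hij]

def slice (m : ℕ) (I : LieIdeal K (triangularInf K)) : Submodule K (MvPolynomial ℕ K) where
  carrier := {w | ∃ a ∈ I, (∀ j < m, a.val (X j) = 0) ∧ a.val (X m) = w}
  add_mem' := by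
    rintro _ _ ⟨a, ha, ha₀, rfl⟩ ⟨b, hb, hb₀, rfl⟩
    exact ⟨a + b, add_mem ha hb, fun j hj => by simp [ha₀ j hj, hb₀ j hj], rfl⟩
  zero_mem' := ⟨0, zero_mem _, fun _ _ => rfl, rfl⟩
  smul_mem' := by
    rintro c _ ⟨a, ha, ha₀, rfl⟩
    exact ⟨c • a, I.smul_mem c ha, fun j hj => by simp [ha₀ j hj], rfl⟩

theorem isTriangularSubmodule_slice (m : ℕ) (I : LieIdeal K (triangularInf K)) :
    IsTriangularSubmodule m (slice m I) where
  mem_supported := by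
    rintro _ ⟨a, -, -, rfl⟩
    exact a.2.1 m
  mul_pderiv_mem := by
    rintro i hi p hp _ ⟨a, ha, ha₀, rfl⟩
    refine ⟨⁅⟨p • pderiv i, smul_pderiv_mem hp⟩, a⁆, I.lie_mem ha, fun j hj => ?_, ?_⟩
    · have hap : a.val p = 0 :=
        derivation_eq_zero_of_mem_supported (fun l hl => ha₀ l (hl.trans hi)) hp
      change ⁅p • pderiv i, a.val⁆ (X j) = 0
      simp [smul_pderiv_lie_apply_X, ha₀ j hj, hap]
    · change ⁅p • pderiv i, a.val⁆ (X m) = _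
      simp [smul_pderiv_lie_apply_X, hi.ne']

variable {I J : LieIdeal K (triangularInf K)}

theorem apply_X_eq_zero_of_slice_eq_bot {j : ℕ} (h : ∀ i ≤ j, slice i I = ⊥)
    {x : triangularInf K} (hx : x ∈ I) : x.val (X j) = 0 := by
  induction j using Nat.strong_induction_on with
  | _ j ih =>
    have hmem : x.val (X j) ∈ slice j I :=
      ⟨x, hx, fun i hi => ih i hi fun i' hi' => h i' (by omega), rfl⟩
    rwa [h j le_rfl, Submodule.mem_bot] at hmem

theorem exists_slice_ne_bot (hI : I ≠ ⊥) :
    ∃ m, slice m I ≠ ⊥ ∧ ∀ x ∈ I, ∀ j < m, x.val (X j) = 0 := by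
  classical
  have hex : ∃ m, slice m I ≠ ⊥ := by
    by_contra! hall
    refine hI ((LieSubmodule.eq_bot_iff I).2 fun x hx => Subtype.ext (derivation_ext fun j => ?_))
    exact apply_X_eq_zero_of_slice_eq_bot (fun i _ => hall i) hx
  exact ⟨Nat.find hex, Nat.find_spec hex, fun x hx j hj =>
    apply_X_eq_zero_of_slice_eq_bot (fun i hi => not_not.1 (Nat.find_min hex (by omega))) hx⟩

variable [CharZero K]

theorem exists_mem_apply_X_eq {a : triangularInf K} (ha : a ∈ I) {m N : ℕ}
    (ha₀ : ∀ l < m, a.val (X l) = 0) (ha₁ : a.val (X m) = 1) (hN : ∀ l > N, a.val (X l) = 0)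
    {j : ℕ} (hmj : m < j) (hjN : j ≤ N) {w : MvPolynomial ℕ K}
    (hw : w ∈ supported K (Set.Iio j)) :
    ∃ e ∈ I, (∀ i < j, e.val (X i) = 0) ∧ e.val (X j) = w ∧ ∀ i > N, e.val (X i) = 0 := by
  obtain ⟨h, hh, hah⟩ :=
    exists_mem_supported_derivation_eq a.val a.2.1 ha₀ ha₁ hmj (neg_mem hw)
  have hpd : ∀ i ≤ j, pderiv j (a.val (X i)) = 0 := fun i hi =>
    pderiv_eq_zero_of_mem_supported (fun hj => (Set.mem_Iio.1 hj).not_ge hi) (a.2.1 i)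
  refine ⟨⁅⟨h • pderiv j, smul_pderiv_mem hh⟩, a⁆, I.lie_mem ha, fun i hi => ?_, ?_,
    fun i hi => ?_⟩ <;> change ⁅h • pderiv j, a.val⁆ (X _) = _ <;>
    rw [smul_pderiv_lie_apply_X]
  · simp [hpd i hi.le, hi.ne]
  · simp [hpd j le_rfl, hah]
  · simp [hN i hi, (hjN.trans_lt hi).ne']

theorem mem_of_apply_X_eq_zero {a : triangularInf K} (ha : a ∈ I) {m N : ℕ}
    (ha₀ : ∀ l < m, a.val (X l) = 0) (ha₁ : a.val (X m) = 1) (hN : ∀ l > N, a.val (X l) = 0)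
    {k : ℕ} (hmk : m < k) (hkN : k ≤ N + 1) {y : triangularInf K}
    (hy₀ : ∀ l < k, y.val (X l) = 0) (hy₁ : ∀ l > N, y.val (X l) = 0) : y ∈ I := by
  induction hkN using Nat.decreasingInduction generalizing y with
  | self =>
    convert zero_mem I
    exact Subtype.ext (derivation_ext fun l => (lt_or_ge l (N + 1)).elim (hy₀ l) (hy₁ l))
  | of_succ k hk ih =>
    obtain ⟨e, he, he₀, he₁, he₂⟩ :=
      exists_mem_apply_X_eq ha ha₀ ha₁ hN hmk (Nat.lt_succ_iff.1 hk) (y.2.1 k)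
    have hye : y - e ∈ I := by
      refine ih (by omega) (fun l hl => ?_) fun l hl => by simp [hy₁ l hl, he₂ l hl]
      rcases (Nat.lt_succ_iff.1 hl).lt_or_eq with hl | rfl
      · simp [hy₀ l hl, he₀ l hl]
      · simp [he₁]
    simpa using add_mem hye he

theorem mem_of_slice_ne_bot {m : ℕ} (hI : slice m I ≠ ⊥) {x : triangularInf K}
    (hx : ∀ l ≤ m, x.val (X l) = 0) : x ∈ I := by
  obtain ⟨a, ha, ha₀, ha₁⟩ := (isTriangularSubmodule_slice m I).one_mem hI
  obtain ⟨N, hN⟩ := (a.2.2.union x.2.2).bddAbove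
  have hvanish : ∀ y, y = a ∨ y = x → ∀ l > N, y.val (X l) = 0 := by
    rintro y hy l hl
    by_contra hne
    exact hl.not_ge (hN (by rcases hy with rfl | rfl <;> simp [hne]))
  have hmN : m ≤ N := by
    by_contra! hNm
    simp [hvanish a (Or.inl rfl) m hNm] at ha₁
  exact mem_of_apply_X_eq_zero ha ha₀ ha₁ (hvanish a (Or.inl rfl)) (Nat.lt_succ_self m)
    (by omega) (fun l hl => hx l (Nat.lt_succ_iff.1 hl)) (hvanish x (Or.inr rfl))

theorem le_of_slice_le {m : ℕ} (hJ : slice m J ≠ ⊥) (hI : ∀ x ∈ I, ∀ j < m, x.val (X j) = 0)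
    (hle : slice m I ≤ slice m J) : I ≤ J := by
  intro x hx
  obtain ⟨b, hb, hb₀, hbx⟩ := hle ⟨x, hx, hI x hx, rfl⟩
  have hxb : x - b ∈ J := mem_of_slice_ne_bot hJ fun l hl => by
    rcases hl.lt_or_eq with hl | rfl
    · simp [hI x hx l hl, hb₀ l hl]
    · simp [hbx]
  simpa using add_mem hxb hb

theorem le_or_le_of_slice_ne_bot {m : ℕ} (hI₀ : slice m I ≠ ⊥)
    (hI : ∀ x ∈ I, ∀ j < m, x.val (X j) = 0) (hJ : ∀ x ∈ J, ∀ j < m, x.val (X j) = 0) :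
    I ≤ J ∨ J ≤ I :=
  ((isTriangularSubmodule_slice m I).le_total (isTriangularSubmodule_slice m J)).imp
    (fun hle => le_of_slice_le (ne_bot_of_le_ne_bot hI₀ hle) hI hle)
    (fun hle => le_of_slice_le hI₀ hJ hle)

theorem lieIdeal_le_total (I J : LieIdeal K (triangularInf K)) : I ≤ J ∨ J ≤ I := by
  rcases eq_or_ne I ⊥ with rfl | hI
  · exact Or.inl bot_le
  rcases eq_or_ne J ⊥ with rfl | hJ
  · exact Or.inr bot_le
  obtain ⟨mI, hmI, hIv⟩ := exists_slice_ne_bot hI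
  obtain ⟨mJ, hmJ, hJv⟩ := exists_slice_ne_bot hJ
  rcases _root_.le_total mI mJ with h | h
  · exact le_or_le_of_slice_ne_bot hmI hIv fun x hx j hj => hJv x hx j (hj.trans_le h)
  · exact (le_or_le_of_slice_ne_bot hmJ hJv fun x hx j hj => hIv x hx j (hj.trans_le h)).symm

end triangularInf

/-- **Statement 18.** (1) Every nonzero ideal `I` of the Lie algebra `u_∞` contains the
ideal `u_{∞,m} = ⊕_{j ≥ m} P_{j-1}∂_j` for some `m ≥ 1` (zero-based: it contains every
element `a` of `u_∞` with `a (X j) = 0` for all `j` with `j + 1 < m`).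
(2) The ideals of `u_∞` are totally ordered by inclusion: `u_∞` is uniserial. -/
theorem triangularInf_ideals
    (K : Type*) [Field K] [CharZero K] :
    (∀ I : LieIdeal K ↥(triangularInf K), I ≠ ⊥ →
      ∃ m : ℕ, 1 ≤ m ∧ ∀ a : ↥(triangularInf K),
        (∀ j : ℕ, j + 1 < m → a.val (X j) = 0) → a ∈ I) ∧
    (∀ I J : LieIdeal K ↥(triangularInf K), I ≤ J ∨ J ≤ I) := by
  refine ⟨fun I hI => ?_, triangularInf.lieIdeal_le_total⟩
  obtain ⟨m, hm, -⟩ := triangularInf.exists_slice_ne_bot hI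
  exact ⟨m + 2, by omega, fun a ha =>
    triangularInf.mem_of_slice_ne_bot hm fun l hl => ha l (by omega)⟩
end
end
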